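/- No chattering: for each agent i of the hybrid system with hysteretic quantization, any two consecutive switching times of q_i are separated by at least (Δ/2)/(‖L‖_∞ · (‖q(0,0)‖_∞ + Δ/2)). Consequently the set of all switching times is locally finite (finitely many in every compact subset of [0,∞)). -/

import Mathlib

/-!
Right after a switch of agent `i` the state `x_i` sits exactly on the new level `q_i` (by continuity
it cannot overshoot the threshold), and the next switch needs `|x_i - q_i| = Δ / 2`; so
`x_i` travels `Δ / 2` between consecutive switches. Its speed `|(L q)_i|` is at most
`‖L‖_∞ ‖q‖_∞`, and `‖q‖_∞ ≤ ‖q(0,0)‖_∞ + Δ / 2` by a discrete maximum principle: an agent at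
the maximum of `q` has `(L q)_i ≥ 0`, so it drifts down and cannot reach its upper threshold,
symmetrically at the minimum, where the closed lower threshold of the initial set costs one
extra lattice step `Δ / 2`. A uniform dwell time then leaves finitely many switches of each
agent below any time bound.
-/

open Matrix Set

theorem intCast_mul_add_le_of_lt {R : Type*} [Ring R] [LinearOrder R] [IsStrictOrderedRing R]
    {c : R} (hc : 0 < c) {m n : ℤ} (h : m * c < n * c) : m * c + c ≤ n * c := by
  have hmn : (m : R) + 1 ≤ n := by exact_mod_cast (lt_of_mul_lt_mul_right h hc.le : (m : R) < n)
  calc m * c + c = (m + 1) * c := by rw [add_one_mul]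
    _ ≤ n * c := mul_le_mul_of_nonneg_right hmn hc.le

theorem le_sub_of_forall_consecutive {S : Set ℕ} {t : ℕ → ℝ} {d : ℝ} (hd : 0 ≤ d)
    (hgap : ∀ j ∈ S, ∀ j' ∈ S, j < j' → (∀ m, j < m → m < j' → m ∉ S) → d ≤ t j' - t j)
    {j j' : ℕ} (hj : j ∈ S) (hj' : j' ∈ S) (hjj' : j < j') : d ≤ t j' - t j := by
  classical
  induction h : j' - j using Nat.strong_induction_on generalizing j with
  | _ k ih =>
    have hex : ∃ m, j < m ∧ m ∈ S := ⟨j', hjj', hj'⟩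
    obtain ⟨hjm, hm⟩ := Nat.find_spec hex
    have hgap₁ := hgap j hj _ hm hjm fun m h₁ h₂ hm => Nat.find_min hex h₂ ⟨h₁, hm⟩
    obtain heq | hlt := (Nat.find_le (p := fun m => j < m ∧ m ∈ S) ⟨hjj', hj'⟩).eq_or_lt
    · rwa [heq] at hgap₁
    · linarith [ih (j' - Nat.find hex) (by omega) hm hlt rfl]

theorem finite_setOf_le_of_forall_consecutive {S : Set ℕ} {t : ℕ → ℝ} {d : ℝ} (hd : 0 < d)
    (hgap : ∀ j ∈ S, ∀ j' ∈ S, j < j' → (∀ m, j < m → m < j' → m ∉ S) → d ≤ t j' - t j)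
    (b : ℝ) : {j | j ∈ S ∧ t j ≤ b}.Finite := by
  classical
  rcases S.eq_empty_or_nonempty with rfl | hne
  · simp
  have hlt : ∀ {j j'}, j ∈ S → j' ∈ S → j < j' → t j + d ≤ t j' := fun hj hj' hjj' => by
    linarith [le_sub_of_forall_consecutive hd.le hgap hj hj' hjj']
  have hmin : ∀ j ∈ S, t (Nat.find hne) ≤ t j := fun j hj => by
    obtain heq | hlt' := (Nat.find_min' hne hj).eq_or_lt
    · rw [heq]
    · linarith [hlt (Nat.find_spec hne) hj hlt']
  refine Set.Finite.of_finite_image (f := fun j => ⌊t j / d⌋)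
    ((Set.finite_Icc ⌊t (Nat.find hne) / d⌋ ⌊b / d⌋).subset ?_) ?_
  · rintro _ ⟨j, ⟨hj, hjb⟩, rfl⟩
    exact ⟨Int.floor_le_floor (by gcongr; exact hmin j hj), Int.floor_le_floor (by gcongr)⟩
  · have hmono : StrictMonoOn (fun j => ⌊t j / d⌋) S := fun j hj j' hj' hjj' => by
      rw [Int.lt_iff_add_one_le, ← Int.floor_add_one]
      refine Int.floor_le_floor ?_
      rw [div_add_one hd.ne']
      gcongr
      exact hlt hj hj' hjj'
    exact hmono.injOn.mono fun j hj => hj.1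

theorem abs_mulVec_apply_le {ι : Type*} [Fintype ι] (M : Matrix ι ι ℝ) {v : ι → ℝ} {B : ℝ}
    (hv : ∀ j, |v j| ≤ B) (i : ι) : |(M *ᵥ v) i| ≤ (∑ j, |M i j|) * B := by
  calc |(M *ᵥ v) i| ≤ ∑ j, |M i j| * |v j| := by
        simpa only [mulVec, dotProduct, abs_mul] using
          Finset.abs_sum_le_sum_abs (fun j => M i j * v j) Finset.univ
    _ ≤ (∑ j, |M i j|) * B := by
        rw [Finset.sum_mul]
        exact Finset.sum_le_sum fun j _ => mul_le_mul_of_nonneg_left (hv j) (abs_nonneg _)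

section Laplacian

variable {ι R : Type*} [Fintype ι] [DecidableEq ι]

def laplacian [CommRing R] (A : Matrix ι ι R) : Matrix ι ι R :=
  diagonal (fun i => ∑ j, A i j) - A

theorem neg_laplacian_mulVec_apply [CommRing R] (A : Matrix ι ι R) (v : ι → R) (i : ι) :
    -(laplacian A *ᵥ v) i = ∑ j, A i j * (v j - v i) := by
  rw [laplacian, sub_mulVec, Pi.sub_apply, mulVec_diagonal]
  simp only [mulVec, dotProduct, mul_sub, Finset.sum_sub_distrib, ← Finset.sum_mul]
  ring

variable [CommRing R] [PartialOrder R] [IsOrderedRing R] {A : Matrix ι ι R} {v : ι → R} {i : ι}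

theorem laplacian_mulVec_apply_nonneg_of_forall_le (hA : ∀ i j, 0 ≤ A i j)
    (hi : ∀ j, v j ≤ v i) : 0 ≤ (laplacian A *ᵥ v) i := by
  rw [← neg_nonpos, neg_laplacian_mulVec_apply]
  exact Finset.sum_nonpos fun j _ => mul_nonpos_of_nonneg_of_nonpos (hA i j) (sub_nonpos.2 (hi j))

theorem laplacian_mulVec_apply_nonpos_of_forall_ge (hA : ∀ i j, 0 ≤ A i j)
    (hi : ∀ j, v i ≤ v j) : (laplacian A *ᵥ v) i ≤ 0 := by
  rw [← neg_nonneg, neg_laplacian_mulVec_apply]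
  exact Finset.sum_nonneg fun j _ => mul_nonneg (hA i j) (sub_nonneg.2 (hi j))

end Laplacian

section Hybrid

variable {ι : Type*} [Fintype ι]

/-- A solution on the hybrid time domain `⋃ j, [τ j, τ (j + 1)] × {j}`: during the `j`-th flow
interval the state is `(x j s, q j)`, and `q (j + 1)` is the hysteretic update of `q j` at the
jump time `τ (j + 1)`, a trivial update being allowed. -/
structure IsHybridSolution (Δ : ℝ) (L : Matrix ι ι ℝ) (τ : ℕ → ℝ) (x : ℕ → ℝ → ι → ℝ)
    (q : ℕ → ι → ℝ) : Prop where
  time_zero : τ 0 = 0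
  monotone : Monotone τ
  lt_succ : ∀ j, 1 ≤ j → τ j < τ (j + 1)
  flow : ∀ j, ∀ s ∈ Icc (τ j) (τ (j + 1)), x j s = x j (τ j) + (s - τ j) • (-(L *ᵥ q j))
  abs_sub_lt_half : ∀ j, ∀ s ∈ Ico (τ j) (τ (j + 1)), ∀ i, |x j s i - q j i| < Δ / 2
  jump_x : ∀ j, x (j + 1) (τ (j + 1)) = x j (τ (j + 1))
  jump_q : ∀ j i, q (j + 1) i =
    if q j i + Δ / 2 ≤ x j (τ (j + 1)) i then q j i + Δ / 2
    else if x j (τ (j + 1)) i ≤ q j i - Δ / 2 then q j i - Δ / 2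
    else q j i
  init : ∀ i, q 0 i - Δ / 2 ≤ x 0 0 i ∧ x 0 0 i < q 0 i + Δ / 2

namespace IsHybridSolution

variable {Δ : ℝ} {L : Matrix ι ι ℝ} {τ : ℕ → ℝ} {x : ℕ → ℝ → ι → ℝ} {q : ℕ → ι → ℝ}
  (hs : IsHybridSolution Δ L τ x q)
include hs

theorem apply_eq {j : ℕ} {s : ℝ} (h : s ∈ Icc (τ j) (τ (j + 1))) (i : ι) :
    x j s i = x j (τ j) i + (s - τ j) * -(L *ᵥ q j) i := by
  simpa using congrFun (hs.flow j s h) i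

theorem apply_succ_sub (j : ℕ) (i : ι) :
    x j (τ (j + 1)) i - x j (τ j) i = (τ (j + 1) - τ j) * -(L *ᵥ q j) i := by
  rw [hs.apply_eq ⟨hs.monotone j.le_succ, le_rfl⟩ i]
  ring

theorem lt_add_half_start (j : ℕ) (i : ι) : x j (τ j) i < q j i + Δ / 2 := by
  rcases Nat.eq_zero_or_pos j with rfl | hj
  · rw [hs.time_zero]
    exact (hs.init i).2
  · linarith [(abs_lt.1 (hs.abs_sub_lt_half j _ ⟨le_rfl, hs.lt_succ j hj⟩ i)).2]

theorem sub_half_lt_start {j : ℕ} (hj : 1 ≤ j) (i : ι) : q j i - Δ / 2 < x j (τ j) i := by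
  linarith [(abs_lt.1 (hs.abs_sub_lt_half j _ ⟨le_rfl, hs.lt_succ j hj⟩ i)).1]

theorem abs_sub_le_end (j : ℕ) (i : ι) : |x j (τ (j + 1)) i - q j i| ≤ Δ / 2 := by
  obtain heq | hlt := (hs.monotone j.le_succ).eq_or_lt
  · obtain rfl : j = 0 := by
      by_contra hj
      exact (hs.lt_succ j (Nat.one_le_iff_ne_zero.2 hj)).ne heq
    rw [← heq, hs.time_zero, abs_le]
    constructor <;> linarith [hs.init i]
  · have hcont : ContinuousOn (fun s => x j s i) (closure (Ico (τ j) (τ (j + 1)))) := by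
      rw [closure_Ico hlt.ne]
      exact (Continuous.continuousOn (by fun_prop)).congr fun s hs' => hs.apply_eq hs' i
    have hmaps : MapsTo (fun s => x j s i) (Ico (τ j) (τ (j + 1))) (Metric.ball (q j i) (Δ / 2)) :=
      fun s hs' => by simpa [Real.dist_eq] using hs.abs_sub_lt_half j s hs' i
    have hend : τ (j + 1) ∈ closure (Ico (τ j) (τ (j + 1))) := by
      rw [closure_Ico hlt.ne]
      exact right_mem_Icc.2 hlt.le
    simpa [Real.dist_eq] using
      Metric.closure_ball_subset_closedBall (hmaps.closure_of_continuousOn hcont hend)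

theorem lt_add_half_end_of_nonneg {j : ℕ} {i : ι} (hv : 0 ≤ (L *ᵥ q j) i) :
    x j (τ (j + 1)) i < q j i + Δ / 2 := by
  have hdisp := hs.apply_succ_sub j i
  have : (τ (j + 1) - τ j) * -(L *ᵥ q j) i ≤ 0 :=
    mul_nonpos_of_nonneg_of_nonpos (sub_nonneg.2 (hs.monotone j.le_succ)) (neg_nonpos.2 hv)
  linarith [hs.lt_add_half_start j i]

theorem sub_half_lt_end_of_nonpos {j : ℕ} (hj : 1 ≤ j) {i : ι} (hv : (L *ᵥ q j) i ≤ 0) :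
    q j i - Δ / 2 < x j (τ (j + 1)) i := by
  have hdisp := hs.apply_succ_sub j i
  have : 0 ≤ (τ (j + 1) - τ j) * -(L *ᵥ q j) i :=
    mul_nonneg (sub_nonneg.2 (hs.monotone j.le_succ)) (neg_nonneg.2 hv)
  linarith [hs.sub_half_lt_start hj i]

theorem q_succ_eq_of_ne {j : ℕ} {i : ι} (h : q (j + 1) i ≠ q j i) :
    q (j + 1) i = x j (τ (j + 1)) i := by
  have hend := abs_le.1 (hs.abs_sub_le_end j i)
  rw [hs.jump_q] at h ⊢
  split_ifs at h ⊢
  · linarith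
  · linarith
  · exact absurd rfl h

theorem half_le_abs_sub_of_ne {j : ℕ} {i : ι} (h : q (j + 1) i ≠ q j i) :
    Δ / 2 ≤ |x j (τ (j + 1)) i - q j i| := by
  rw [hs.jump_q] at h
  rw [le_abs']
  split_ifs at h
  · right; linarith
  · left; linarith
  · exact absurd rfl h

theorem abs_sub_le_mul_sub {V : ℝ} (hV : ∀ m i, |(L *ᵥ q m) i| ≤ V) (i : ι) {a b : ℕ}
    (hab : a ≤ b) : |x b (τ b) i - x a (τ a) i| ≤ V * (τ b - τ a) := by
  induction b, hab using Nat.le_induction with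
  | base => simp
  | succ b hab ih =>
    have hstep : |x (b + 1) (τ (b + 1)) i - x b (τ b) i| ≤ V * (τ (b + 1) - τ b) := by
      rw [hs.jump_x, hs.apply_succ_sub, abs_mul, abs_neg, mul_comm,
        abs_of_nonneg (sub_nonneg.2 (hs.monotone b.le_succ))]
      exact mul_le_mul_of_nonneg_right (hV b i) (sub_nonneg.2 (hs.monotone b.le_succ))
    calc |x (b + 1) (τ (b + 1)) i - x a (τ a) i|
        ≤ |x (b + 1) (τ (b + 1)) i - x b (τ b) i| + |x b (τ b) i - x a (τ a) i| :=
          abs_sub_le _ _ _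
      _ ≤ V * (τ (b + 1) - τ b) + V * (τ b - τ a) := add_le_add hstep ih
      _ = V * (τ (b + 1) - τ a) := by ring

theorem half_le_mul_sub_of_consecutive {V : ℝ} (hV : ∀ m i, |(L *ᵥ q m) i| ≤ V) {i : ι}
    {j j' : ℕ} (hjj' : j < j') (hsw : q (j + 1) i ≠ q j i) (hsw' : q (j' + 1) i ≠ q j' i)
    (hbetween : ∀ m, j < m → m < j' → q (m + 1) i = q m i) :
    Δ / 2 ≤ V * (τ (j' + 1) - τ (j + 1)) := by
  have hconst : ∀ m, j + 1 ≤ m → m ≤ j' → q m i = q (j + 1) i := by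
    intro m hm
    induction m, hm using Nat.le_induction with
    | base => exact fun _ => rfl
    | succ m hm ih => exact fun hmj' => (hbetween m (by omega) (by omega)).trans (ih (by omega))
  calc Δ / 2 ≤ |x j' (τ (j' + 1)) i - q j' i| := hs.half_le_abs_sub_of_ne hsw'
    _ = |x (j' + 1) (τ (j' + 1)) i - x (j + 1) (τ (j + 1)) i| := by
      rw [hconst j' (by omega) le_rfl, hs.q_succ_eq_of_ne hsw, hs.jump_x, hs.jump_x]
    _ ≤ V * (τ (j' + 1) - τ (j + 1)) := hs.abs_sub_le_mul_sub hV i (by omega)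

section

variable [DecidableEq ι] {A : Matrix ι ι ℝ} (hL : L = laplacian A) (hA : ∀ i j, 0 ≤ A i j)
  (hΔ : 0 < Δ) (hlat : ∀ j i, ∃ k : ℤ, q j i = k * (Δ / 2))
include hL hA hΔ hlat

theorem q_le_of_init_le {M : ℝ} (hM : ∃ k : ℤ, M = k * (Δ / 2)) (h0 : ∀ i, q 0 i ≤ M)
    (m : ℕ) (i : ι) : q m i ≤ M := by
  induction m generalizing i with
  | zero => exact h0 i
  | succ m ih =>
    rw [hs.jump_q]
    split_ifs with hup
    · obtain hlt | heq := (ih i).lt_or_eq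
      · obtain ⟨k, hk⟩ := hlat m i
        obtain ⟨n, rfl⟩ := hM
        rw [hk] at hlt ⊢
        exact intCast_mul_add_le_of_lt (half_pos hΔ) hlt
      · have hv : 0 ≤ (L *ᵥ q m) i :=
          hL ▸ laplacian_mulVec_apply_nonneg_of_forall_le hA fun j => heq ▸ ih j
        exact absurd hup (hs.lt_add_half_end_of_nonneg hv).not_ge
    · linarith [ih i]
    · exact ih i

theorem sub_half_le_q_of_le_init {M : ℝ} (hM : ∃ k : ℤ, M = k * (Δ / 2))
    (h0 : ∀ i, M ≤ q 0 i) (m : ℕ) (i : ι) : M - Δ / 2 ≤ q m i := by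
  induction m generalizing i with
  | zero => linarith [h0 i]
  | succ m ih =>
    rw [hs.jump_q]
    split_ifs with _ hdown
    · linarith [ih i]
    · by_contra! h
      have hlt : q m i < M := by linarith
      have hm : 1 ≤ m := Nat.one_le_iff_ne_zero.2 fun hm => by subst hm; linarith [h0 i]
      have heq : q m i = M - Δ / 2 := by
        obtain ⟨k, hk⟩ := hlat m i
        obtain ⟨n, rfl⟩ := hM
        rw [hk] at hlt ⊢
        linarith [intCast_mul_add_le_of_lt (half_pos hΔ) hlt, hk ▸ ih i]
      have hv : (L *ᵥ q m) i ≤ 0 :=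
        hL ▸ laplacian_mulVec_apply_nonpos_of_forall_ge hA fun j => heq ▸ ih j
      exact absurd hdown (hs.sub_half_lt_end_of_nonpos hm hv).not_ge
    · exact ih i

theorem abs_q_le_add_half {M : ℝ} (hM : ∃ k : ℤ, M = k * (Δ / 2)) (h0 : ∀ i, |q 0 i| ≤ M)
    (m : ℕ) (i : ι) : |q m i| ≤ M + Δ / 2 := by
  obtain ⟨k, hk⟩ := hM
  have hup := hs.q_le_of_init_le hL hA hΔ hlat ⟨k, hk⟩
    (fun i => (le_abs_self _).trans (h0 i)) m i
  have hlow := hs.sub_half_le_q_of_le_init hL hA hΔ hlat (M := -M)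
    ⟨-k, by push_cast; rw [hk]; ring⟩ (fun i => by linarith [neg_abs_le (q 0 i), h0 i]) m i
  rw [abs_le]
  constructor <;> linarith

end

end IsHybridSolution

end Hybrid

theorem hybrid_no_chattering_general (N : ℕ) [NeZero N] (Δ : ℝ) (hΔ : 0 < Δ)
    (A : Matrix (Fin N) (Fin N) ℝ)
    (hA : ∀ i j, 0 ≤ A i j)
    (L : Matrix (Fin N) (Fin N) ℝ)
    (hL : L = (Matrix.diagonal fun i => ∑ j, A i j) - A)
    (τ : ℕ → ℝ) (hτ0 : τ 0 = 0) (hτ : Monotone τ)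
    (hnontriv : ∀ j, 1 ≤ j → τ j < τ (j + 1))
    (x : ℕ → ℝ → Fin N → ℝ) (q : ℕ → Fin N → ℝ)
    (hlat : ∀ j i, ∃ m : ℤ, q j i = m * (Δ / 2))
    (hflow : ∀ j, ∀ s ∈ Set.Icc (τ j) (τ (j + 1)),
      x j s = x j (τ j) + (s - τ j) • (-(L.mulVec (q j))))
    (hC : ∀ j, ∀ s ∈ Set.Ico (τ j) (τ (j + 1)), ∀ i, |x j s i - q j i| < Δ / 2)
    (hjumpx : ∀ j, x (j + 1) (τ (j + 1)) = x j (τ (j + 1)))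
    (hjumpq : ∀ j i, q (j + 1) i =
      if q j i + Δ / 2 ≤ x j (τ (j + 1)) i then q j i + Δ / 2
      else if x j (τ (j + 1)) i ≤ q j i - Δ / 2 then q j i - Δ / 2
      else q j i)
    (hX0 : ∀ i, q 0 i - Δ / 2 ≤ x 0 0 i ∧ x 0 0 i < q 0 i + Δ / 2)
    (CL Q0 : ℝ)
    (hCLdef : CL = Finset.univ.sup' Finset.univ_nonempty (fun i => ∑ j, |L i j|))
    (hQ0def : Q0 = Finset.univ.sup' Finset.univ_nonempty (fun i => |q 0 i|)) :
    (∀ i : Fin N, ∀ j j' : ℕ, j < j' →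
      q (j + 1) i ≠ q j i → q (j' + 1) i ≠ q j' i →
      (∀ m, j < m → m < j' → q (m + 1) i = q m i) →
      Δ / 2 / (CL * (Q0 + Δ / 2)) ≤ τ (j' + 1) - τ (j + 1)) ∧
    (∀ K : Set ℝ, IsCompact K →
      {j : ℕ | τ (j + 1) ∈ K ∧ q (j + 1) ≠ q j}.Finite) := by
  have hs : IsHybridSolution Δ L τ x q := ⟨hτ0, hτ, hnontriv, hflow, hC, hjumpx, hjumpq, hX0⟩
  have hQ0 : ∃ k : ℤ, Q0 = k * (Δ / 2) := by
    obtain ⟨i₀, -, hi₀⟩ := Finset.exists_mem_eq_sup' Finset.univ_nonempty fun i => |q 0 i|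
    obtain ⟨k, hk⟩ := hlat 0 i₀
    exact ⟨|k|, by rw [hQ0def, hi₀, hk, abs_mul, abs_of_pos (half_pos hΔ), Int.cast_abs]⟩
  have hq : ∀ m i, |q m i| ≤ Q0 + Δ / 2 := hs.abs_q_le_add_half hL hA hΔ hlat hQ0 fun i =>
    hQ0def ▸ Finset.le_sup' (fun i => |q 0 i|) (Finset.mem_univ i)
  have hV : ∀ m i, |(L *ᵥ q m) i| ≤ CL * (Q0 + Δ / 2) := fun m i =>
    (abs_mulVec_apply_le L (hq m) i).trans <| mul_le_mul_of_nonneg_right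
      (hCLdef ▸ Finset.le_sup' (fun i => ∑ j, |L i j|) (Finset.mem_univ i))
      ((abs_nonneg _).trans (hq m i))
  have hV0 : 0 ≤ CL * (Q0 + Δ / 2) := (abs_nonneg _).trans (hV 0 0)
  refine ⟨fun i j j' hjj' hsw hsw' hbet => div_le_of_le_mul₀ hV0 (sub_nonneg.2 (hτ (by omega)))
    (by linarith [hs.half_le_mul_sub_of_consecutive hV hjj' hsw hsw' hbet]), fun K hK => ?_⟩
  obtain ⟨b, hb⟩ := hK.bddAbove
  -- `CL * (Q0 + Δ / 2)` may vanish, making the dwell time above the junk value `0`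
  refine (Set.finite_iUnion fun i => finite_setOf_le_of_forall_consecutive
    (S := {j | q (j + 1) i ≠ q j i}) (t := fun j => τ (j + 1))
    (d := Δ / 2 / (CL * (Q0 + Δ / 2) + 1)) (div_pos (half_pos hΔ) (by linarith))
    (fun j hj j' hj' hjj' hbet => div_le_of_le_mul₀ (by linarith) (sub_nonneg.2 (hτ (by omega)))
      ?_) b).subset ?_
  · linarith [hs.half_le_mul_sub_of_consecutive hV hjj' hj hj'
      fun m h₁ h₂ => not_not.1 (hbet m h₁ h₂), sub_nonneg.2 (hτ (show j + 1 ≤ j' + 1 by omega))]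
  · rintro j ⟨hjK, hne⟩
    obtain ⟨i, hi⟩ := Function.ne_iff.1 hne
    exact Set.mem_iUnion.2 ⟨i, hi, hb hjK⟩

/-- no chattering: for each agent `i` of the hybrid system with
hysteretic quantization, any two consecutive switching times of `q_i` are
separated by at least `(Δ/2)/(‖L‖_∞·(‖q(0,0)‖_∞ + Δ/2))`; consequently the set
of switching times is locally finite (finitely many in every compact set). -/
theorem hybrid_no_chattering (N : ℕ) [NeZero N] (Δ : ℝ) (hΔ : 0 < Δ)
    (A : Matrix (Fin N) (Fin N) ℝ)
    (hA : ∀ i j, 0 ≤ A i j) (hdiag : ∀ i, A i i = 0)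
    (hbal : ∀ i, ∑ j, A i j = ∑ j, A j i)
    (L : Matrix (Fin N) (Fin N) ℝ)
    (hL : L = (Matrix.diagonal fun i => ∑ j, A i j) - A)
    (τ : ℕ → ℝ) (hτ0 : τ 0 = 0) (hτ : Monotone τ)
    (hnontriv : ∀ j, 1 ≤ j → τ j < τ (j + 1))
    (x : ℕ → ℝ → Fin N → ℝ) (q : ℕ → Fin N → ℝ)
    (hlat : ∀ j i, ∃ m : ℤ, q j i = m * (Δ / 2))
    (hflow : ∀ j, ∀ s ∈ Set.Icc (τ j) (τ (j + 1)),
      x j s = x j (τ j) + (s - τ j) • (-(L.mulVec (q j))))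
    (hC : ∀ j, ∀ s ∈ Set.Ico (τ j) (τ (j + 1)), ∀ i, |x j s i - q j i| < Δ / 2)
    (hjumpx : ∀ j, x (j + 1) (τ (j + 1)) = x j (τ (j + 1)))
    (hjumpq : ∀ j i, q (j + 1) i =
      if q j i + Δ / 2 ≤ x j (τ (j + 1)) i then q j i + Δ / 2
      else if x j (τ (j + 1)) i ≤ q j i - Δ / 2 then q j i - Δ / 2
      else q j i)
    (hX0 : ∀ i, q 0 i - Δ / 2 ≤ x 0 0 i ∧ x 0 0 i < q 0 i + Δ / 2)
    (CL Q0 : ℝ)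
    (hCLdef : CL = Finset.univ.sup' Finset.univ_nonempty (fun i => ∑ j, |L i j|))
    (hQ0def : Q0 = Finset.univ.sup' Finset.univ_nonempty (fun i => |q 0 i|)) :
    (∀ i : Fin N, ∀ j j' : ℕ, j < j' →
      q (j + 1) i ≠ q j i → q (j' + 1) i ≠ q j' i →
      (∀ m, j < m → m < j' → q (m + 1) i = q m i) →
      Δ / 2 / (CL * (Q0 + Δ / 2)) ≤ τ (j' + 1) - τ (j + 1)) ∧
    (∀ K : Set ℝ, IsCompact K →
      {j : ℕ | τ (j + 1) ∈ K ∧ q (j + 1) ≠ q j}.Finite) :=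
  hybrid_no_chattering_general N Δ hΔ A hA L hL τ hτ0 hτ hnontriv x q hlat hflow hC hjumpx hjumpq
    hX0 CL Q0 hCLdef hQ0def
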